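/- If E is not a parent of Y and S_ICP is invariant, then S_ICP is the unique minimally invariant set, i.e., MI = {S_ICP}. -/
import Mathlib


/-- Nodes of the graph: the environment node `E`, predictor nodes `V j` for
`j ∈ {1, …, d}` (represented by `Fin d`), and the response node `Y`. -/
inductive Node (d : ℕ) : Type where
  | E : Node d
  | V : Fin d → Node d
  | Y : Node d
deriving DecidableEq

/-- A directed acyclic graph on `{E} ∪ {1, …, d} ∪ {Y}` in which `E` has no
parents (`E` is exogenous). -/
structure CGraph (d : ℕ) where
  adj : Node d → Node d → Prop
  acyclic : ∀ v, ¬ Relation.TransGen adj v v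
  exogenous : ∀ v, ¬ adj v Node.E

namespace CGraph

variable {d : ℕ} (G : CGraph d)

/-- Undirected adjacency: an edge between `u` and `v` in either direction. -/
def Edge (u v : Node d) : Prop := G.adj u v ∨ G.adj v u

/-- `p` is a path between `a` and `b`: a duplicate-free list of nodes starting
at `a`, ending at `b`, with consecutive nodes adjacent (in either direction). -/
def IsPath (p : List (Node d)) (a b : Node d) : Prop :=
  p.head? = some a ∧ p.getLast? = some b ∧ p.Nodup ∧ p.Chain' G.Edge

/-- `x` is a (strict) descendant of `v`. -/
def Desc (v x : Node d) : Prop := Relation.TransGen G.adj v x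

/-- The consecutive triple `u, m, w` on a path blocks the path given `C`:
either `m` is a non-collider lying in `C`, or `m` is a collider such that
neither `m` nor any of its descendants lies in `C`. -/
def BlockedAt (C : Set (Node d)) (u m w : Node d) : Prop :=
  (¬ (G.adj u m ∧ G.adj w m) ∧ m ∈ C) ∨
  ((G.adj u m ∧ G.adj w m) ∧ m ∉ C ∧ ∀ x, G.Desc m x → x ∉ C)

/-- A path `p` is blocked by `C` if some consecutive triple on it blocks it. -/
def Blocked (C : Set (Node d)) (p : List (Node d)) : Prop :=
  ∃ q u m w r, p = q ++ u :: m :: w :: r ∧ G.BlockedAt C u m w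

/-- `a` and `b` are d-separated given `C`: every path between them is blocked. -/
def DSep (a b : Node d) (C : Set (Node d)) : Prop :=
  ∀ p, G.IsPath p a b → G.Blocked C p

/-- `S ⊆ {1, …, d}` is invariant if `E` and `Y` are d-separated given `S`. -/
def Invariant (S : Set (Fin d)) : Prop := G.DSep Node.E Node.Y (Node.V '' S)

/-- `S` is minimally invariant if it is invariant and no strict subset of `S`
is invariant. -/
def MinInvariant (S : Set (Fin d)) : Prop :=
  G.Invariant S ∧ ∀ S', S' ⊂ S → ¬ G.Invariant S'

/-- `S_AS`: the union of all minimally invariant sets. -/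
def SAS : Set (Fin d) := ⋃₀ {S | G.MinInvariant S}

/-- `S_ICP`: the intersection of all invariant sets (`∅` if there are none). -/
def SICP : Set (Fin d) :=
  {j | (∃ S, G.Invariant S) ∧ ∀ S, G.Invariant S → j ∈ S}

/-- `S_AS^m`: the union of all minimally invariant sets of cardinality `≤ m`. -/
def SASm (m : ℕ) : Set (Fin d) := ⋃₀ {S | G.MinInvariant S ∧ S.ncard ≤ m}

/-- The parents of `Y` among `{1, …, d}`. -/
def paY : Set (Fin d) := {j | G.adj (Node.V j) Node.Y}

/-- The children of `E` among `{1, …, d}`. -/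
def chE : Set (Fin d) := {j | G.adj Node.E (Node.V j)}

/-- The ancestors of `Y` among `{1, …, d}`. -/
def anY : Set (Fin d) := {j | Relation.TransGen G.adj (Node.V j) Node.Y}

/-- `PA(A)`: the union of the parent sets of the elements of `A ⊆ {1, …, d}`. -/
def paOf (A : Set (Fin d)) : Set (Fin d) := {j | ∃ i ∈ A, G.adj (Node.V j) (Node.V i)}

end CGraph

/-- if `E` is not a parent of `Y` and `S_ICP` is invariant, then
`S_ICP` is the unique minimally invariant set, i.e., `MI = {S_ICP}`. -/
theorem MI_eq_singleton_SICP {d : ℕ} (G : CGraph d)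
    (h : ¬ G.adj Node.E Node.Y) (hinv : G.Invariant G.SICP) :
    {S : Set (Fin d) | G.MinInvariant S} = {G.SICP} := by
  have hsub : ∀ S, G.Invariant S → G.SICP ⊆ S := by
    intro S hS j hj
    exact hj.2 S hS
  ext S
  simp only [Set.mem_setOf_eq, Set.mem_singleton_iff]
  constructor
  · rintro ⟨hSinv, hmin⟩
    by_contra hne
    have hss : G.SICP ⊂ S := lt_of_le_of_ne (hsub S hSinv) (fun e => hne e.symm)
    exact hmin G.SICP hss hinv
  · rintro rfl
    refine ⟨hinv, fun S' hss hS' => ?_⟩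
    exact hss.2 (hsub S' hS')
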